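/- For every decorated tree τ, Ψ(τ) = C(β(τ))·z^{β(τ)} in ℝ[coord], where z^β := Π_{ι ∈ coord} z_ι^{β(ι)} and C(β) := Π_{(l,k)} (k! / Π_{m ∈ ℕ^d} (m!)^{k(m)})^{β(l,k)} · Π_{n ∈ ℕ^d} (n!)^{β(n)}. -/

import Mathlib

/-!
By induction on `τ`, `Ψ(τ)` is a single monomial: exponents add along the recursion, and `C`
turns sums of exponents into products, each occurrence of a coordinate contributing one weight.
The only point is the node weight: since `k = Σ_j e_{m_j}`, we have `Π_m (m!)^{k(m)} = Π_j m_j!`,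
so the weight `k! / Π_m (m!)^{k(m)}` of `(l,k)` is exactly the factor `k! · Π_j 1/m_j!` that `Ψ`
attaches to the node.
-/

open scoped Classical

noncomputable section

/-- The set of `d`-tuples of natural numbers, `ℕ^d`. -/
abbrev Nd (d : ℕ) : Type := Fin d → ℕ

/-- Multi-indices over `ℕ^d`. -/
abbrev MNd (d : ℕ) : Type := Nd d →₀ ℕ

/-- The coordinate set `coord = (𝔏 × M(ℕ^d)) ⊔ ℕ^d`, with `𝔏 = 𝔏⁻ ∪ {0}`
modelled as `Option Lm` (`none` playing the role of `0`). -/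
abbrev Coord (Lm : Type) (d : ℕ) : Type := (Option Lm × MNd d) ⊕ Nd d

/-- Multi-indices over `coord`. -/
abbrev MCoord (Lm : Type) (d : ℕ) : Type := Coord Lm d →₀ ℕ

/-- Decorated trees: `X n` for `n ∈ ℕ^d`, and `node l r ms ts` representing
`Ξ_l⟨(ms 0, ts 0), …, (ms (r-1), ts (r-1))⟩`. -/
inductive DTree (Lm : Type) (d : ℕ) : Type where
  | X : Nd d → DTree Lm d
  | node : Option Lm → (r : ℕ) → (Fin r → Nd d) → (Fin r → DTree Lm d) → DTree Lm d

variable {Lm : Type} {d : ℕ}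

/-- `n!` for `n ∈ ℕ^d`. -/
def factNd (n : Nd d) : ℕ := ∏ i, (n i).factorial

/-- `k!` for `k ∈ M(ℕ^d)`. -/
def factM (k : MNd d) : ℕ := k.prod fun _ v => v.factorial

/-- The multi-index `k = Σ_j e_{m_j}` of outgoing edge decorations. -/
def kOf {r : ℕ} (ms : Fin r → Nd d) : MNd d := ∑ j, Finsupp.single (ms j) 1

/-- The map `Ψ` on decorated trees. -/
def Psi : DTree Lm d → MvPolynomial (Coord Lm d) ℝ :=
  DTree.rec (motive := fun _ => MvPolynomial (Coord Lm d) ℝ)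
    (fun n => MvPolynomial.C (factNd n : ℝ) * MvPolynomial.X (Sum.inr n))
    (fun l r ms _ts ih =>
      MvPolynomial.C (factM (kOf ms) : ℝ) * MvPolynomial.X (Sum.inl (l, kOf ms)) *
        ∏ j : Fin r, (MvPolynomial.C (1 / (factNd (ms j) : ℝ)) * ih j))

/-- The multi-index `β(τ)` of a decorated tree. -/
def betaOf : DTree Lm d → MCoord Lm d :=
  DTree.rec (motive := fun _ => MCoord Lm d)
    (fun n => Finsupp.single (Sum.inr n) 1)
    (fun l r ms _ts ih =>
      Finsupp.single (Sum.inl (l, kOf ms)) 1 + ∑ j : Fin r, ih j)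

/-- The combinatorial coefficient `C(β)`. -/
def Ccoef (β : MCoord Lm d) : ℝ :=
  β.prod fun x v =>
    match x with
    | Sum.inl (_, k) =>
        ((factM k : ℝ) / (k.prod fun m vm => (factNd m : ℝ) ^ vm)) ^ v
    | Sum.inr n => ((factNd n : ℝ)) ^ v

lemma Finsupp.prod_pow_sum_single_one {α ι M : Type*} [CommMonoid M] (s : Finset ι)
    (a : ι → α) (g : α → M) :
    ((∑ j ∈ s, Finsupp.single (a j) 1).prod fun x v => g x ^ v) = ∏ j ∈ s, g (a j) := by
  rw [← Finsupp.prod_finsetSum_index (fun _ => pow_zero _) (fun _ _ _ => pow_add _ _ _)]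
  exact Finset.prod_congr rfl fun j _ =>
    (Finsupp.prod_single_index (h := fun x v => g x ^ v) (pow_zero _)).trans (pow_one _)

def coordWeight : Coord Lm d → ℝ
  | Sum.inl (_, k) => (factM k : ℝ) / (k.prod fun m vm => (factNd m : ℝ) ^ vm)
  | Sum.inr n => (factNd n : ℝ)

lemma Ccoef_eq_prod (β : MCoord Lm d) : Ccoef β = β.prod fun x v => coordWeight x ^ v := by
  refine Finset.prod_congr rfl fun x _ => ?_
  rcases x with ⟨l, k⟩ | n <;> rfl

lemma Ccoef_add (β γ : MCoord Lm d) : Ccoef (β + γ) = Ccoef β * Ccoef γ := by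
  simp only [Ccoef_eq_prod]
  exact Finsupp.prod_add_index' (fun _ => pow_zero _) (fun _ _ _ => pow_add _ _ _)

lemma Ccoef_single_one (x : Coord Lm d) : Ccoef (Finsupp.single x 1) = coordWeight x := by
  rw [Ccoef_eq_prod]
  exact (Finsupp.prod_single_index (h := fun x v => coordWeight x ^ v) (pow_zero _)).trans
    (pow_one _)

lemma Ccoef_sum {ι : Type*} (s : Finset ι) (β : ι → MCoord Lm d) :
    Ccoef (∑ j ∈ s, β j) = ∏ j ∈ s, Ccoef (β j) := by
  simp only [Ccoef_eq_prod]
  exact (Finsupp.prod_finsetSum_index (fun _ => pow_zero _) (fun _ _ _ => pow_add _ _ _)).symm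

lemma coordWeight_inl_kOf (l : Option Lm) {r : ℕ} (ms : Fin r → Nd d) :
    coordWeight (Sum.inl (l, kOf ms) : Coord Lm d) =
      (factM (kOf ms) : ℝ) / ∏ j, (factNd (ms j) : ℝ) :=
  congrArg (_ / ·) (Finsupp.prod_pow_sum_single_one _ _ _)

lemma Psi_X (n : Nd d) :
    Psi (DTree.X n : DTree Lm d) = MvPolynomial.C (factNd n : ℝ) * MvPolynomial.X (Sum.inr n) :=
  rfl

lemma Psi_node (l : Option Lm) (r : ℕ) (ms : Fin r → Nd d) (ts : Fin r → DTree Lm d) :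
    Psi (DTree.node l r ms ts) =
      MvPolynomial.C (factM (kOf ms) : ℝ) * MvPolynomial.X (Sum.inl (l, kOf ms)) *
        ∏ j, (MvPolynomial.C (1 / (factNd (ms j) : ℝ)) * Psi (ts j)) :=
  rfl

lemma betaOf_X (n : Nd d) : betaOf (DTree.X n : DTree Lm d) = Finsupp.single (Sum.inr n) 1 :=
  rfl

lemma betaOf_node (l : Option Lm) (r : ℕ) (ms : Fin r → Nd d) (ts : Fin r → DTree Lm d) :
    betaOf (DTree.node l r ms ts) =
      Finsupp.single (Sum.inl (l, kOf ms)) 1 + ∑ j, betaOf (ts j) :=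
  rfl

theorem Psi_eq_monomial (τ : DTree Lm d) :
    Psi τ = MvPolynomial.monomial (betaOf τ) (Ccoef (betaOf τ)) := by
  induction τ with
  | X n =>
    rw [Psi_X, betaOf_X, Ccoef_single_one, MvPolynomial.C_mul_X_eq_monomial]
    rfl
  | node l r ms ts ih =>
    have hcoef : (factM (kOf ms) : ℝ) * ∏ j, (1 / (factNd (ms j) : ℝ) * Ccoef (betaOf (ts j))) =
        coordWeight (Sum.inl (l, kOf ms)) * ∏ j, Ccoef (betaOf (ts j)) := by
      rw [coordWeight_inl_kOf, Finset.prod_mul_distrib, Finset.prod_div_distrib,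
        Finset.prod_const_one]
      ring
    simp only [Psi_node, betaOf_node, ih, MvPolynomial.C_mul_monomial,
      ← MvPolynomial.monomial_sum_prod, MvPolynomial.C_mul_X_eq_monomial,
      MvPolynomial.monomial_mul, hcoef, Ccoef_add, Ccoef_single_one, Ccoef_sum]

theorem stmt18_general {Lm : Type} {d : ℕ} (τ : DTree Lm d) :
    Psi τ = MvPolynomial.C (Ccoef (betaOf τ)) *
      (betaOf τ).prod fun ι v => MvPolynomial.X ι ^ v := by
  rw [Psi_eq_monomial, MvPolynomial.monomial_eq]

theorem stmt18 {Lm : Type} [Fintype Lm] {d : ℕ} (hd : 1 ≤ d) (τ : DTree Lm d) :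
    Psi τ = MvPolynomial.C (Ccoef (betaOf τ)) *
      (betaOf τ).prod fun ι v => MvPolynomial.X ι ^ v :=
  stmt18_general τ

end
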